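/- arXiv:1705.08565 — 8 statements merged into one kernel-verified Lean document; each statement's English description precedes it below -/
import Mathlib

section
/- Let D be a triangulated category with shift Σ. A morphism f in D is an isomorphism if and only if f is homotopy orthogonal to itself (where e ⊥ m means: completing e and m to triangles with cones C_e, C_m, the map D(C_e, Σ⁻¹C_m) → D(E₁, M₀), φ ↦ Σ⁻¹β_m ∘ φ ∘ α_e, is zero, and the map D(C_e, C_m) → D(E₁, ΣM₀), φ ↦ β_m ∘ φ ∘ α_e, is injective). -/
open CategoryTheory Category Limits Pretriangulated ZeroObject

universe v u w

section Defs

variable {D : Type u} [Category.{v} D] [HasZeroObject D] [Preadditive D]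
  [HasShift D ℤ] [∀ n : ℤ, (shiftFunctor D n).Additive] [Pretriangulated D]

/-- Homotopy orthogonality (Def. 1.1): conditions (HO1) and (HO2), stated for every
completion of `e` and `m` to distinguished triangles. -/
def HOrth {E₀ E₁ M₀ M₁ : D} (e : E₀ ⟶ E₁) (m : M₀ ⟶ M₁) : Prop :=
  ∀ (Ce : D) (αe : E₁ ⟶ Ce) (βe : Ce ⟶ E₀⟦(1:ℤ)⟧),
    Triangle.mk e αe βe ∈ (distTriang D) →
    ∀ (Cm : D) (αm : M₁ ⟶ Cm) (βm : Cm ⟶ M₀⟦(1:ℤ)⟧),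
      Triangle.mk m αm βm ∈ (distTriang D) →
      (∀ φ : Ce ⟶ Cm⟦(-1:ℤ)⟧,
        αe ≫ φ ≫ βm⟦(-1:ℤ)⟧' ≫
          (shiftFunctorCompIsoId D (1:ℤ) (-1:ℤ) (by omega)).hom.app M₀ = 0) ∧
      Function.Injective (fun φ : Ce ⟶ Cm => αe ≫ φ ≫ βm)

/-- The right homotopy-orthogonal class `E^⊥`. -/
def rightOrth (E : MorphismProperty D) : MorphismProperty D :=
  fun _ _ m => ∀ ⦃A B : D⦄ (e : A ⟶ B), E e → HOrth e m

/-- The left homotopy-orthogonal class `^⊥M`. -/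
def leftOrth (M : MorphismProperty D) : MorphismProperty D :=
  fun _ _ e => ∀ ⦃A B : D⦄ (m : A ⟶ B), M m → HOrth e m

/-- The 3-for-2 property for a class of morphisms. -/
def ThreeForTwo (P : MorphismProperty D) : Prop :=
  ∀ ⦃X Y Z : D⦄ (f : X ⟶ Y) (g : Y ⟶ Z),
    (P f → P g → P (f ≫ g)) ∧ (P f → P (f ≫ g) → P g) ∧ (P g → P (f ≫ g) → P f)

/-- A triangulated pre-factorization system (Def. 1.12(1)). -/
structure IsTriPFS (E M : MorphismProperty D) : Prop where
  right_eq : rightOrth E = M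
  left_eq : leftOrth M = E
  shiftE : ∀ ⦃X Y : D⦄ (f : X ⟶ Y), E f → E (f⟦(1:ℤ)⟧')

/-- A triangulated factorization system (Def. 1.12(2)). -/
structure IsTriFS (E M : MorphismProperty D) extends IsTriPFS E M : Prop where
  fact : ∀ ⦃X Y : D⦄ (f : X ⟶ Y),
    ∃ (P : D) (e : X ⟶ P) (m : P ⟶ Y), E e ∧ M m ∧ e ≫ m = f

/-- A normal triangulated torsion theory (Defs. 1.15, 1.16). -/
structure IsNormalTTT (E M : MorphismProperty D) extends IsTriFS E M : Prop where
  three_E : ThreeForTwo E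
  three_M : ThreeForTwo M
  normal : ∀ ⦃X T : D⦄ (e : X ⟶ T) (m : T ⟶ (0:D)), E e → M m →
    ∀ ⦃R : D⦄ (r : R ⟶ X) (δ : T ⟶ R⟦(1:ℤ)⟧),
      Triangle.mk r e δ ∈ (distTriang D) → E (0 : R ⟶ (0:D))

/-- A middling good morphism of triangles (Neeman): one extending to a 3×3 diagram
whose rows and columns are distinguished triangles, all squares commuting except
the lower-right one, which anticommutes. -/
def MiddlingGood {A₀ B₀ C₀ A₁ B₁ C₁ : D}
    (φ₀ : A₀ ⟶ B₀) (ψ₀ : B₀ ⟶ C₀) (δ₀ : C₀ ⟶ A₀⟦(1:ℤ)⟧)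
    (φ₁ : A₁ ⟶ B₁) (ψ₁ : B₁ ⟶ C₁) (δ₁ : C₁ ⟶ A₁⟦(1:ℤ)⟧)
    (a : A₀ ⟶ A₁) (b : B₀ ⟶ B₁) (c : C₀ ⟶ C₁) : Prop :=
  ∃ (Ca Cb Cc : D)
    (αa : A₁ ⟶ Ca) (βa : Ca ⟶ A₀⟦(1:ℤ)⟧)
    (αb : B₁ ⟶ Cb) (βb : Cb ⟶ B₀⟦(1:ℤ)⟧)
    (αc : C₁ ⟶ Cc) (βc : Cc ⟶ C₀⟦(1:ℤ)⟧)
    (fa : Ca ⟶ Cb) (fb : Cb ⟶ Cc) (δ : Cc ⟶ Ca⟦(1:ℤ)⟧),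
    Triangle.mk a αa βa ∈ (distTriang D) ∧
    Triangle.mk b αb βb ∈ (distTriang D) ∧
    Triangle.mk c αc βc ∈ (distTriang D) ∧
    Triangle.mk fa fb δ ∈ (distTriang D) ∧
    φ₁ ≫ αb = αa ≫ fa ∧
    ψ₁ ≫ αc = αb ≫ fb ∧
    δ₁ ≫ αa⟦(1:ℤ)⟧' = αc ≫ δ ∧
    βa ≫ φ₀⟦(1:ℤ)⟧' = fa ≫ βb ∧
    βb ≫ ψ₀⟦(1:ℤ)⟧' = fb ≫ βc ∧
    δ ≫ βa⟦(1:ℤ)⟧' = -(βc ≫ δ₀⟦(1:ℤ)⟧')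

end Defs

/-- A t-structure on a triangulated category (Def. 2.1), together with choices of the
truncation functors `τ^{≤0}` (right adjoint to the inclusion of `D^{≤0}`) and
`τ^{≥1}` (left adjoint to the inclusion of `D^{≥1}`).  Here `ge` is `D^{≥0}` and
membership of `X` in `D^{≥1} = Σ⁻¹ D^{≥0}` is expressed as `X⟦1⟧ ∈ ge`. -/
structure TData (D : Type u) [Category.{v} D] [HasZeroObject D] [Preadditive D]
    [HasShift D ℤ] [∀ n : ℤ, (shiftFunctor D n).Additive] [Pretriangulated D] where
  le : Set D
  ge : Set D
  le_iso : ∀ ⦃X Y : D⦄, (X ≅ Y) → X ∈ le → Y ∈ le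
  ge_iso : ∀ ⦃X Y : D⦄, (X ≅ Y) → X ∈ ge → Y ∈ ge
  shift_le : ∀ ⦃X : D⦄, X ∈ le → X⟦(1:ℤ)⟧ ∈ le
  shift_ge : ∀ ⦃X : D⦄, X⟦(1:ℤ)⟧ ∈ ge → X ∈ ge
  hom_zero : ∀ ⦃X Y : D⦄ (f : X ⟶ Y), X ∈ le → Y⟦(1:ℤ)⟧ ∈ ge → f = 0
  tri : ∀ X : D, ∃ (A B : D) (i : A ⟶ X) (p : X ⟶ B) (δ : B ⟶ A⟦(1:ℤ)⟧),
    A ∈ le ∧ B⟦(1:ℤ)⟧ ∈ ge ∧ Triangle.mk i p δ ∈ (distTriang D)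
  tle : D ⥤ D
  σ : tle ⟶ 𝟭 D
  tle_mem : ∀ X : D, tle.obj X ∈ le
  tle_univ : ∀ ⦃A : D⦄, A ∈ le → ∀ X : D,
    Function.Bijective (fun g : A ⟶ tle.obj X => g ≫ σ.app X)
  tge : D ⥤ D
  ρ : 𝟭 D ⟶ tge
  tge_mem : ∀ X : D, (tge.obj X)⟦(1:ℤ)⟧ ∈ ge
  tge_univ : ∀ X : D, ∀ ⦃B : D⦄, B⟦(1:ℤ)⟧ ∈ ge →
    Function.Bijective (fun g : tge.obj X ⟶ B => ρ.app X ≫ g)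

section TDefs

variable {D : Type u} [Category.{v} D] [HasZeroObject D] [Preadditive D]
  [HasShift D ℤ] [∀ n : ℤ, (shiftFunctor D n).Additive] [Pretriangulated D]

/-- `E_t`: morphisms `φ` with `τ^{≥1} φ` invertible. -/
def Et (t : TData D) : MorphismProperty D := fun _ _ φ => IsIso (t.tge.map φ)

/-- `M_t`: morphisms `φ` with `τ^{≤0} φ` invertible. -/
def Mt (t : TData D) : MorphismProperty D := fun _ _ φ => IsIso (t.tle.map φ)

end TDefs

section Statements

variable {D : Type u} [Category.{v} D] [HasZeroObject D] [Preadditive D]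
  [HasShift D ℤ] [∀ n : ℤ, (shiftFunctor D n).Additive] [Pretriangulated D]

theorem hOrth_of_isIso_left {E₀ E₁ M₀ M₁ : D} (e : E₀ ⟶ E₁) [IsIso e] (m : M₀ ⟶ M₁) :
    HOrth e m := by
  intro Ce αe βe hTe _ _ _ _
  have hCe : IsZero Ce := Triangle.isZero₃_of_isIso₁ _ hTe (inferInstanceAs (IsIso e))
  exact ⟨fun φ => by simp [hCe.eq_of_src φ 0], fun φ φ' _ => hCe.eq_of_src φ φ'⟩

/-- Applying (HO2) to `𝟙 C` and `0`, which agree after `α ≫ - ≫ β = 0`, forces `𝟙 C = 0`. -/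
theorem HOrth.isZero_cone_of_self {X Y : D} {f : X ⟶ Y} (h : HOrth f f) {C : D}
    {α : Y ⟶ C} {β : C ⟶ X⟦(1:ℤ)⟧} (hT : Triangle.mk f α β ∈ distTriang D) : IsZero C := by
  rw [IsZero.iff_id_eq_zero]
  apply (h C α β hT C α β hT).2
  have hαβ : α ≫ β = 0 := comp_distTriang_mor_zero₂₃ _ hT
  simp [hαβ]

/-- A morphism is an isomorphism iff it is homotopy orthogonal to itself (Lemma 1.3). -/
theorem iso_iff_self_homotopy_orthogonal {X Y : D} (f : X ⟶ Y) :
    IsIso f ↔ HOrth f f := by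
  refine ⟨fun _ => hOrth_of_isIso_left f f, fun h => ?_⟩
  obtain ⟨C, α, β, hT⟩ := distinguished_cocone_triangle f
  exact (Triangle.isZero₃_iff_isIso₁ _ hT).1 (h.isZero_cone_of_self hT)

end Statements
end

section
/- Let D be a triangulated category and let e ⊥ m be homotopy orthogonal morphisms completed to triangles with cones C_e and C_m. Then condition (HO2) is equivalent to (HO2'): for every commutative square (a,b) : e → m in the arrow category, the unique morphism φ : C_e → C_m completing (a,b) to a morphism of triangles is zero. -/
open CategoryTheory Category Limits Pretriangulated ZeroObject

universe v u w

section Statements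

variable {D : Type u} [Category.{v} D] [HasZeroObject D] [Preadditive D]
  [HasShift D ℤ] [∀ n : ℤ, (shiftFunctor D n).Additive] [Pretriangulated D]

lemma exists_eq_mor₃_comp_shift_map {T : Triangle D} (hT : T ∈ distTriang D) {X : D}
    (f : T.obj₃ ⟶ X⟦(1:ℤ)⟧) (hf : T.mor₂ ≫ f = 0) :
    ∃ a : T.obj₁ ⟶ X, f = T.mor₃ ≫ a⟦(1:ℤ)⟧' := by
  obtain ⟨g, rfl⟩ := Triangle.yoneda_exact₃ T hT f hf
  exact ⟨(shiftFunctor D (1:ℤ)).preimage g, by rw [Functor.map_preimage]⟩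

/-- (HO2) is equivalent to (HO2') (Remark 1.2). -/
theorem HO2_iff_HO2' {E₀ E₁ M₀ M₁ Ce Cm : D} (e : E₀ ⟶ E₁) (m : M₀ ⟶ M₁)
    (αe : E₁ ⟶ Ce) (βe : Ce ⟶ E₀⟦(1:ℤ)⟧)
    (hTe : Triangle.mk e αe βe ∈ (distTriang D))
    (αm : M₁ ⟶ Cm) (βm : Cm ⟶ M₀⟦(1:ℤ)⟧)
    (hTm : Triangle.mk m αm βm ∈ (distTriang D)) :
    Function.Injective (fun φ : Ce ⟶ Cm => αe ≫ φ ≫ βm) ↔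
      ∀ (a : E₀ ⟶ M₀) (b : E₁ ⟶ M₁) (φ : Ce ⟶ Cm),
        a ≫ m = e ≫ b → b ≫ αm = αe ≫ φ → φ ≫ βm = βe ≫ a⟦(1:ℤ)⟧' → φ = 0 := by
  change Function.Injective
      ((Preadditive.leftComp _ αe).comp (Preadditive.rightComp _ βm)) ↔ _
  rw [injective_iff_map_eq_zero]
  constructor
  · intro hker a b φ _ _ hφ
    apply hker
    have hαβ : αe ≫ βe = 0 := comp_distTriang_mor_zero₂₃ _ hTe
    change αe ≫ φ ≫ βm = 0
    rw [hφ, reassoc_of% hαβ, zero_comp]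
  · intro hHO2' φ hφ
    -- `φ ≫ βm` dies on `αe`, so it factors through `βe` as `a⟦1⟧'`; TR3 then supplies `b`.
    obtain ⟨a, ha⟩ := exists_eq_mor₃_comp_shift_map hTe (φ ≫ βm) hφ
    obtain ⟨b, hab, hbφ⟩ := complete_distinguished_triangle_morphism₂ _ _ hTe hTm a φ ha.symm
    exact hHO2' a b φ hab.symm hbφ.symm ha

end Statements
end

section
/- Let D be a triangulated category with coproducts. If f_i ⊥ g for all i in an index set I (homotopy orthogonality), then the coproduct ∐_i f_i is homotopy orthogonal to g. Dually, if g ⊥ f_i for all i, then g ⊥ ∏_i f_i. -/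
open CategoryTheory Category Limits Pretriangulated ZeroObject

universe v u w

/-! Complete each `f i` to a distinguished triangle and compare it with the given triangle on
`∐ f i`. A diagram chase, using that the shift preserves coproducts, shows that the comparison
maps `c i` between the cones are jointly epimorphic. (HO1) for `∐ f i` is then checked summand
by summand, and for (HO2) a map `φ` with `α ≫ φ ≫ β = 0` gives `c i ≫ φ = 0` by (HO2) for
`f i`, hence `φ = 0`. Products are dual. -/

lemma injective_comp_comp_iff {C : Type u} [Category.{v} C] [Preadditive C]
    {W X Y Z : C} (a : W ⟶ X) (b : Y ⟶ Z) :
    Function.Injective (fun φ : X ⟶ Y => a ≫ φ ≫ b) ↔ ∀ φ : X ⟶ Y, a ≫ φ ≫ b = 0 → φ = 0 :=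
  injective_iff_map_eq_zero ((Preadditive.leftComp Z a).comp (Preadditive.rightComp X b))

section Cones

variable {D : Type u} [Category.{v} D] [HasZeroObject D] [Preadditive D]
  [HasShift D ℤ] [∀ n : ℤ, (shiftFunctor D n).Additive] [Pretriangulated D]

lemma sigmaMap_cone_eq_zero_of_comp {I : Type w} {A B : I → D} [HasCoproduct A] [HasCoproduct B]
    {f : ∀ i, A i ⟶ B i} {C : I → D} {α : ∀ i, B i ⟶ C i} {β : ∀ i, C i ⟶ (A i)⟦(1:ℤ)⟧}
    (hT : ∀ i, Triangle.mk (f i) (α i) (β i) ∈ distTriang D)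
    {C' : D} {α' : ∐ B ⟶ C'} {β' : C' ⟶ (∐ A)⟦(1:ℤ)⟧}
    (hT' : Triangle.mk (Limits.Sigma.map f) α' β' ∈ distTriang D)
    (c : ∀ i, C i ⟶ C') (hc₁ : ∀ i, α i ≫ c i = Sigma.ι B i ≫ α')
    (hc₂ : ∀ i, β i ≫ (Sigma.ι A i)⟦(1:ℤ)⟧' = c i ≫ β')
    {Z : D} (φ : C' ⟶ Z) (hφ : ∀ i, c i ≫ φ = 0) : φ = 0 := by
  obtain ⟨ψ, rfl⟩ : ∃ ψ : (∐ A)⟦(1:ℤ)⟧ ⟶ Z, φ = β' ≫ ψ := by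
    refine Triangle.yoneda_exact₃ _ hT' φ (Sigma.hom_ext _ _ fun i => ?_)
    change Sigma.ι B i ≫ α' ≫ φ = Sigma.ι B i ≫ 0
    rw [comp_zero, ← reassoc_of% hc₁, hφ, comp_zero]
  have hψ i : ∃ k : (B i)⟦(1:ℤ)⟧ ⟶ Z, (Sigma.ι A i)⟦(1:ℤ)⟧' ≫ ψ = (-(f i)⟦(1:ℤ)⟧') ≫ k := by
    refine Triangle.yoneda_exact₃ _ (rot_of_distTriang _ (hT i)) _ ?_
    change β i ≫ (Sigma.ι A i)⟦(1:ℤ)⟧' ≫ ψ = 0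
    rw [reassoc_of% hc₂, hφ]
  choose k hk using hψ
  have hA := isColimitOfHasCoproductOfPreservesColimit (shiftFunctor D (1:ℤ)) A
  have hB := isColimitOfHasCoproductOfPreservesColimit (shiftFunctor D (1:ℤ)) B
  obtain rfl : ψ = (Limits.Sigma.map f)⟦(1:ℤ)⟧' ≫ Cofan.IsColimit.desc hB fun i => -k i := by
    refine Cofan.IsColimit.hom_ext hA _ _ fun i => ?_
    have hdesc := Cofan.IsColimit.fac hB (fun i => -k i) i
    simp only [cofan_mk_inj] at hdesc ⊢
    rw [hk, ← Functor.map_comp_assoc, Sigma.ι_map, Functor.map_comp_assoc, hdesc,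
      Preadditive.neg_comp, Preadditive.comp_neg]
  have h₃₁ : β' ≫ (Limits.Sigma.map f)⟦(1:ℤ)⟧' = 0 := comp_distTriang_mor_zero₃₁ _ hT'
  rw [← assoc, h₃₁, zero_comp]

lemma piMap_cone_eq_zero_of_comp {I : Type w} {A B : I → D} [HasProduct A] [HasProduct B]
    {f : ∀ i, A i ⟶ B i} {C : I → D} {α : ∀ i, B i ⟶ C i} {β : ∀ i, C i ⟶ (A i)⟦(1:ℤ)⟧}
    (hT : ∀ i, Triangle.mk (f i) (α i) (β i) ∈ distTriang D)
    {C' : D} {α' : ∏ᶜ B ⟶ C'} {β' : C' ⟶ (∏ᶜ A)⟦(1:ℤ)⟧}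
    (hT' : Triangle.mk (Limits.Pi.map f) α' β' ∈ distTriang D)
    (c : ∀ i, C' ⟶ C i) (hc₁ : ∀ i, α' ≫ c i = Pi.π B i ≫ α i)
    (hc₂ : ∀ i, β' ≫ (Pi.π A i)⟦(1:ℤ)⟧' = c i ≫ β i)
    {Z : D} (φ : Z ⟶ C') (hφ : ∀ i, φ ≫ c i = 0) : φ = 0 := by
  have hA := isLimitOfHasProductOfPreservesLimit (shiftFunctor D (1:ℤ)) A
  obtain ⟨ψ, rfl⟩ : ∃ ψ : Z ⟶ ∏ᶜ B, φ = ψ ≫ α' := by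
    refine Triangle.coyoneda_exact₃ _ hT' φ (Fan.IsLimit.hom_ext hA _ _ fun i => ?_)
    change (φ ≫ β') ≫ (Pi.π A i)⟦(1:ℤ)⟧' = 0 ≫ (Pi.π A i)⟦(1:ℤ)⟧'
    rw [zero_comp, assoc, hc₂, ← assoc, hφ, zero_comp]
  have hψ i : ∃ θ : Z ⟶ A i, ψ ≫ Pi.π B i = θ ≫ f i := by
    refine Triangle.coyoneda_exact₂ _ (hT i) _ ?_
    change (ψ ≫ Pi.π B i) ≫ α i = 0
    rw [assoc, ← hc₁, ← assoc, hφ]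
  choose θ hθ using hψ
  obtain rfl : ψ = Pi.lift θ ≫ Limits.Pi.map f :=
    Pi.hom_ext _ _ fun i => by rw [hθ, assoc, Pi.map_π, limit.lift_π_assoc]; rfl
  have h₁₂ : Limits.Pi.map f ≫ α' = 0 := comp_distTriang_mor_zero₁₂ _ hT'
  rw [assoc, h₁₂, comp_zero]

lemma hOrth_sigmaMap {I : Type w} {A B : I → D} [HasCoproduct A] [HasCoproduct B]
    (f : ∀ i, A i ⟶ B i) {G₀ G₁ : D} (g : G₀ ⟶ G₁) (h : ∀ i, HOrth (f i) g) :
    HOrth (Limits.Sigma.map f) g := by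
  intro C' α' β' hT' Cg αg βg hTg
  choose C α β hT using fun i => distinguished_cocone_triangle (f i)
  obtain ⟨c, hc₁, hc₂⟩ : ∃ c : ∀ i, C i ⟶ C', (∀ i, α i ≫ c i = Sigma.ι B i ≫ α') ∧
      ∀ i, β i ≫ (Sigma.ι A i)⟦(1:ℤ)⟧' = c i ≫ β' := by
    choose c hc₁ hc₂ using fun i => complete_distinguished_triangle_morphism _ _ (hT i) hT'
      (Sigma.ι A i) (Sigma.ι B i) (Sigma.ι_map f i).symm
    exact ⟨c, hc₁, hc₂⟩
  have ho i := h i _ _ _ (hT i) _ _ _ hTg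
  refine ⟨fun φ => Sigma.hom_ext _ _ fun i => ?_,
    (injective_comp_comp_iff _ _).2 fun φ hφ => ?_⟩
  · simpa [reassoc_of% (hc₁ i)] using (ho i).1 (c i ≫ φ)
  · refine sigmaMap_cone_eq_zero_of_comp hT hT' c hc₁ hc₂ φ fun i => (ho i).2 ?_
    simp [reassoc_of% hc₁ i, hφ]

lemma hOrth_piMap {I : Type w} {A B : I → D} [HasProduct A] [HasProduct B]
    (f : ∀ i, A i ⟶ B i) {G₀ G₁ : D} (g : G₀ ⟶ G₁) (h : ∀ i, HOrth g (f i)) :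
    HOrth g (Limits.Pi.map f) := by
  intro Cg αg βg hTg C' α' β' hT'
  choose C α β hT using fun i => distinguished_cocone_triangle (f i)
  obtain ⟨c, hc₁, hc₂⟩ : ∃ c : ∀ i, C' ⟶ C i, (∀ i, α' ≫ c i = Pi.π B i ≫ α i) ∧
      ∀ i, β' ≫ (Pi.π A i)⟦(1:ℤ)⟧' = c i ≫ β i := by
    choose c hc₁ hc₂ using fun i => complete_distinguished_triangle_morphism _ _ hT' (hT i)
      (Pi.π A i) (Pi.π B i) (Pi.map_π f i)
    exact ⟨c, hc₁, hc₂⟩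
  have ho i := h i _ _ _ hTg _ _ _ (hT i)
  refine ⟨fun φ => Pi.hom_ext _ _ fun i => ?_,
    (injective_comp_comp_iff _ _).2 fun φ hφ => ?_⟩
  · have nat := (shiftFunctorCompIsoId D (1:ℤ) (-1:ℤ) (by omega)).hom.naturality (Pi.π A i)
    dsimp at nat
    rw [zero_comp, assoc, assoc, assoc, ← nat, ← Functor.map_comp_assoc, hc₂ i, Functor.map_comp]
    simpa using (ho i).1 (φ ≫ (c i)⟦(-1:ℤ)⟧')
  · refine piMap_cone_eq_zero_of_comp hT hT' c hc₁ hc₂ φ fun i => (ho i).2 ?_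
    simp only [assoc, ← hc₂, reassoc_of% hφ, zero_comp, comp_zero]

end Cones

section Statements

variable {D : Type u} [Category.{v} D] [HasZeroObject D] [Preadditive D]
  [HasShift D ℤ] [∀ n : ℤ, (shiftFunctor D n).Additive] [Pretriangulated D]

/-- Homotopy orthogonality is stable under coproducts on the left and products on the
right (Lemma 1.6). -/
theorem homotopy_orthogonal_coprod_prod {I : Type w} {A B A' B' : I → D}
    (f : ∀ i, A i ⟶ B i) (f' : ∀ i, A' i ⟶ B' i) {G₀ G₁ : D} (g : G₀ ⟶ G₁)
    [HasCoproduct A] [HasCoproduct B] [HasProduct A'] [HasProduct B'] :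
    ((∀ i, HOrth (f i) g) → HOrth (Limits.Sigma.map f) g) ∧
    ((∀ i, HOrth g (f' i)) → HOrth g (Limits.Pi.map f')) :=
  ⟨hOrth_sigmaMap f g, hOrth_piMap f' g⟩

end Statements
end

section
/- Let D be a triangulated category, ψ a morphism in D, and consider a homotopy cartesian square with left edge φ : X₀ → X₁ and right edge φ' : X'₀ → X'₁ (so φ' is a homotopy pushout of φ). If both φ ⊥ ψ and φ ⊥ Σ⁻¹ψ hold (homotopy orthogonality), then φ' ⊥ ψ. -/
open CategoryTheory Category Limits Pretriangulated ZeroObject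

universe v u w

/-!
Fix a cone `C` of `φ`, a cone `C'` of `φ'` and a map of triangles `c : C ⟶ C'` over `(s, t)`.
If every map `ΣX₀ ⟶ Z` is killed by the connecting map `C ⟶ ΣX₀`, then `c ≫ γ = 0` forces
`γ = 0` for `γ : C' ⟶ Z`. Indeed, the connecting map `X₁' ⟶ ΣX₀` of the homotopy cartesian square
factors through `C`, so `γ` vanishes on `X₁'` and hence factors through `ΣX₀'`; since the shifted
square is a weak pushout, that factorization goes through `Σφ'`, which `C' ⟶ ΣX₀'` kills.

Because `α ≫ β = 0`, condition (HO2) for `φ ⊥ ψ`, resp. `φ ⊥ Σ⁻¹ψ`, provides this vanishing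
for `Z` the cone of `ψ`, resp. its desuspension. Precomposing with `c` then reduces (HO2) for
`φ' ⊥ ψ` to (HO2) for `φ ⊥ ψ`, and (HO1) for `φ' ⊥ ψ` to (HO1) for `φ ⊥ ψ` combined with (HO2)
for `φ ⊥ Σ⁻¹ψ`.
-/

section Preadditive

variable {D : Type u} [Category.{v} D] [Preadditive D]

lemma injective_comp_comp_iff_s4 {A B Z W : D} (a : A ⟶ B) (b : Z ⟶ W) :
    Function.Injective (fun x : B ⟶ Z => a ≫ x ≫ b) ↔ ∀ x : B ⟶ Z, a ≫ x ≫ b = 0 → x = 0 := by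
  refine ⟨fun h x hx => h (by simpa using hx), fun h x y hxy => sub_eq_zero.1 (h _ ?_)⟩
  simpa [Preadditive.sub_comp, Preadditive.comp_sub, sub_eq_zero] using hxy

end Preadditive

section Pretriangulated

variable {D : Type u} [Category.{v} D] [HasZeroObject D] [Preadditive D]
  [HasShift D ℤ] [∀ n : ℤ, (shiftFunctor D n).Additive] [Pretriangulated D]

lemma shift_neg_one_mk_distinguished {A B Z : D} (u : A ⟶ B) (v : B ⟶ Z) (w : Z ⟶ A⟦(1:ℤ)⟧)
    (hT : Triangle.mk u v w ∈ distTriang D) :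
    Triangle.mk (u⟦(-1:ℤ)⟧') (v⟦(-1:ℤ)⟧')
      (-(w⟦(-1:ℤ)⟧' ≫ (shiftFunctorComm D (1:ℤ) (-1:ℤ)).hom.app A)) ∈ distTriang D := by
  -- For `n = -1` the shifted triangle has all three maps negated; the isomorphism
  -- `(-1, 1, -1)` absorbs the signs.
  let negIso (X : D) : X ≅ X := ⟨-𝟙 X, -𝟙 X, by simp, by simp⟩
  refine isomorphic_distinguished _ (Triangle.shift_distinguished _ hT (-1)) _
    (Triangle.isoMk _ _ (negIso _) (Iso.refl _) (negIso _) ?_ ?_ ?_)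
  · change u⟦(-1:ℤ)⟧' ≫ 𝟙 _ = (-𝟙 _) ≫ ((-1:ℤ).negOnePow • u⟦(-1:ℤ)⟧')
    simp
  · change v⟦(-1:ℤ)⟧' ≫ (-𝟙 _) = 𝟙 _ ≫ ((-1:ℤ).negOnePow • v⟦(-1:ℤ)⟧')
    simp
  · change (-(w⟦(-1:ℤ)⟧' ≫ _)) ≫ (-𝟙 (A⟦(-1:ℤ)⟧))⟦(1:ℤ)⟧' =
      (-𝟙 _) ≫ ((-1:ℤ).negOnePow • w⟦(-1:ℤ)⟧' ≫ (shiftFunctorComm D (1:ℤ) (-1:ℤ)).hom.app A)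
    simp

lemma mor₃_comp_eq_zero {A B C Z W : D} {f : A ⟶ B} {g : B ⟶ C} {h : C ⟶ A⟦(1:ℤ)⟧}
    (hT : Triangle.mk f g h ∈ distTriang D) {b : Z ⟶ W} (hb : ∀ x : C ⟶ Z, g ≫ x ≫ b = 0 → x = 0)
    (ρ : A⟦(1:ℤ)⟧ ⟶ Z) : h ≫ ρ = 0 := by
  have hgh : g ≫ h = 0 := comp_distTriang_mor_zero₂₃ _ hT
  exact hb _ (by simp [reassoc_of% hgh])

end Pretriangulated

namespace HomotopyCartesian

variable {D : Type u} [Category.{v} D] [HasZeroObject D] [Preadditive D]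
  [HasShift D ℤ] [∀ n : ℤ, (shiftFunctor D n).Additive] [Pretriangulated D] [HasBinaryBiproducts D]
  {X₀ X₁ X₀' X₁' C C' : D} {φ : X₀ ⟶ X₁} {s : X₀ ⟶ X₀'} {t : X₁ ⟶ X₁'} {φ' : X₀' ⟶ X₁'}
  {δ : X₁' ⟶ X₀⟦(1:ℤ)⟧} {α : X₁ ⟶ C} {β : C ⟶ X₀⟦(1:ℤ)⟧} {α' : X₁' ⟶ C'} {β' : C' ⟶ X₀'⟦(1:ℤ)⟧}

lemma w (hT : Triangle.mk (biprod.lift φ (-s)) (biprod.desc t φ') δ ∈ distTriang D) :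
    φ ≫ t = s ≫ φ' := by
  have h : biprod.lift φ (-s) ≫ biprod.desc t φ' = 0 := comp_distTriang_mor_zero₁₂ _ hT
  rwa [biprod.lift_desc, Preadditive.neg_comp, ← sub_eq_add_neg, sub_eq_zero] at h

lemma exists_eq_comp_mor₃
    (hT : Triangle.mk (biprod.lift φ (-s)) (biprod.desc t φ') δ ∈ distTriang D)
    (hT₀ : Triangle.mk φ α β ∈ distTriang D) : ∃ d : X₁' ⟶ C, δ = d ≫ β := by
  obtain ⟨d, -, hd⟩ : ∃ d : X₁' ⟶ C, biprod.desc t φ' ≫ d = biprod.fst ≫ α ∧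
      δ ≫ (𝟙 X₀)⟦(1:ℤ)⟧' = d ≫ β :=
    complete_distinguished_triangle_morphism _ _ hT hT₀ (𝟙 X₀) biprod.fst
      ((biprod.lift_fst _ _).trans (id_comp φ).symm)
  exact ⟨d, by simpa using hd⟩

lemma exists_shift_desc
    (hT : Triangle.mk (biprod.lift φ (-s)) (biprod.desc t φ') δ ∈ distTriang D)
    {W : D} (a : X₁⟦(1:ℤ)⟧ ⟶ W) (b : X₀'⟦(1:ℤ)⟧ ⟶ W) (h : φ⟦(1:ℤ)⟧' ≫ a = s⟦(1:ℤ)⟧' ≫ b) :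
    ∃ L : X₁'⟦(1:ℤ)⟧ ⟶ W, t⟦(1:ℤ)⟧' ≫ L = a ∧ φ'⟦(1:ℤ)⟧' ≫ L = b := by
  have := preservesBinaryBiproducts_of_preservesBiproducts (shiftFunctor D (1:ℤ))
  let e := (shiftFunctor D (1:ℤ)).mapBiprod X₁ X₀'
  have hf : (-(biprod.lift φ (-s))⟦(1:ℤ)⟧') ≫ e.hom ≫ biprod.desc a b = 0 := by
    rw [Preadditive.neg_comp, ← assoc, biprod.map_lift_mapBiprod]
    simp [h]
  obtain ⟨L, hL⟩ : ∃ L : X₁'⟦(1:ℤ)⟧ ⟶ W,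
      e.hom ≫ biprod.desc a b = (-(biprod.desc t φ')⟦(1:ℤ)⟧') ≫ L :=
    Triangle.yoneda_exact₃ _ (rot_of_distTriang _ (rot_of_distTriang _ hT)) _ hf
  have hab : biprod.desc a b = e.inv ≫ (-(biprod.desc t φ')⟦(1:ℤ)⟧') ≫ L := by
    rw [← hL, e.inv_hom_id_assoc]
  rw [Preadditive.neg_comp, Preadditive.comp_neg, ← assoc, biprod.mapBiprod_inv_map_desc] at hab
  exact ⟨-L, by simpa using (biprod.inl ≫= hab).symm, by simpa using (biprod.inr ≫= hab).symm⟩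

lemma mor₂_comp_eq_zero_of_comp_eq_zero
    (hT : Triangle.mk (biprod.lift φ (-s)) (biprod.desc t φ') δ ∈ distTriang D)
    (hT₀ : Triangle.mk φ α β ∈ distTriang D) (hT' : Triangle.mk φ' α' β' ∈ distTriang D)
    {c : C ⟶ C'} (hc : α ≫ c = t ≫ α') {Z : D} (hZ : ∀ ρ : X₀⟦(1:ℤ)⟧ ⟶ Z, β ≫ ρ = 0)
    {γ : C' ⟶ Z} (hγ : c ≫ γ = 0) : α' ≫ γ = 0 := by
  have hφ' : φ' ≫ α' = 0 := comp_distTriang_mor_zero₁₂ _ hT'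
  have h : biprod.desc t φ' ≫ α' ≫ γ = 0 := by
    apply biprod.hom_ext'
    · simp [← reassoc_of% hc, hγ]
    · simp [reassoc_of% hφ']
  obtain ⟨ρ, hρ⟩ : ∃ ρ : X₀⟦(1:ℤ)⟧ ⟶ Z, α' ≫ γ = δ ≫ ρ := Triangle.yoneda_exact₃ _ hT _ h
  obtain ⟨d, rfl⟩ := exists_eq_comp_mor₃ hT hT₀
  rw [hρ, assoc, hZ, comp_zero]

lemma eq_zero_of_comp_eq_zero
    (hT : Triangle.mk (biprod.lift φ (-s)) (biprod.desc t φ') δ ∈ distTriang D)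
    (hT₀ : Triangle.mk φ α β ∈ distTriang D) (hT' : Triangle.mk φ' α' β' ∈ distTriang D)
    {c : C ⟶ C'} (hc₁ : α ≫ c = t ≫ α') (hc₂ : β ≫ s⟦(1:ℤ)⟧' = c ≫ β')
    {Z : D} (hZ : ∀ ρ : X₀⟦(1:ℤ)⟧ ⟶ Z, β ≫ ρ = 0) {γ : C' ⟶ Z} (hγ : c ≫ γ = 0) : γ = 0 := by
  obtain ⟨k, rfl⟩ : ∃ k : X₀'⟦(1:ℤ)⟧ ⟶ Z, γ = β' ≫ k :=
    Triangle.yoneda_exact₃ _ hT' γ (mor₂_comp_eq_zero_of_comp_eq_zero hT hT₀ hT' hc₁ hZ hγ)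
  have hsk : β ≫ s⟦(1:ℤ)⟧' ≫ k = 0 := by rwa [reassoc_of% hc₂]
  obtain ⟨l, hl⟩ : ∃ l : X₁⟦(1:ℤ)⟧ ⟶ Z, s⟦(1:ℤ)⟧' ≫ k = (-φ⟦(1:ℤ)⟧') ≫ l :=
    Triangle.yoneda_exact₃ _ (rot_of_distTriang _ hT₀) _ hsk
  obtain ⟨L, -, hL⟩ := exists_shift_desc hT (-l) k (by simp [hl])
  have hβ' : β' ≫ φ'⟦(1:ℤ)⟧' = 0 := comp_distTriang_mor_zero₃₁ _ hT'
  rw [← hL, reassoc_of% hβ', zero_comp]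

end HomotopyCartesian

section Statements

variable {D : Type u} [Category.{v} D] [HasZeroObject D] [Preadditive D]
  [HasShift D ℤ] [∀ n : ℤ, (shiftFunctor D n).Additive] [Pretriangulated D]

/-- Homotopy pushouts preserve left homotopy orthogonality (Lemma 1.9(3)). -/
theorem homotopy_orthogonal_of_homotopy_pushout [HasBinaryBiproducts D]
    {X₀ X₁ X₀' X₁' Y₀ Y₁ : D}
    (φ : X₀ ⟶ X₁) (s : X₀ ⟶ X₀') (t : X₁ ⟶ X₁') (φ' : X₀' ⟶ X₁') (ψ : Y₀ ⟶ Y₁)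
    (δ : X₁' ⟶ X₀⟦(1:ℤ)⟧)
    (hT : Triangle.mk (biprod.lift φ (-s)) (biprod.desc t φ') δ ∈ (distTriang D))
    (h1 : HOrth φ ψ) (h2 : HOrth φ (ψ⟦(-1:ℤ)⟧')) :
    HOrth φ' ψ := by
  intro C' α' β' hT' Cm αm βm hTm
  obtain ⟨C, α, β, hT₀⟩ := distinguished_cocone_triangle φ
  obtain ⟨c, hc₁, hc₂⟩ : ∃ c : C ⟶ C', α ≫ c = t ≫ α' ∧ β ≫ s⟦(1:ℤ)⟧' = c ≫ β' :=
    complete_distinguished_triangle_morphism _ _ hT₀ hT' s t (HomotopyCartesian.w hT)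
  obtain ⟨hψ₁, hψ₂⟩ := h1 C α β hT₀ Cm αm βm hTm
  obtain ⟨-, hψ₂'⟩ := h2 C α β hT₀ _ _ _ (shift_neg_one_mk_distinguished ψ αm βm hTm)
  rw [injective_comp_comp_iff_s4] at hψ₂ hψ₂'
  have hcancel {Z W : D} {b : Z ⟶ W} (hb : ∀ x : C ⟶ Z, α ≫ x ≫ b = 0 → x = 0) {γ : C' ⟶ Z}
      (hγ : α ≫ (c ≫ γ) ≫ b = 0) : γ = 0 :=
    HomotopyCartesian.eq_zero_of_comp_eq_zero hT hT₀ hT' hc₁ hc₂ (mor₃_comp_eq_zero hT₀ hb)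
      (hb _ hγ)
  refine ⟨fun γ => ?_, (injective_comp_comp_iff_s4 _ _).2 fun γ hγ => hcancel hψ₂ ?_⟩
  · rw [hcancel hψ₂' (γ := γ), zero_comp, comp_zero]
    rw [Preadditive.comp_neg, Preadditive.comp_neg, neg_eq_zero,
      shiftFunctorComm_hom_app_of_add_eq_zero (1:ℤ) (-1) (by omega)]
    simpa using hψ₁ (c ≫ γ) =≫ (shiftFunctorCompIsoId D (-1:ℤ) 1 (by omega)).inv.app Y₀
  · simpa [reassoc_of% hc₁] using t ≫= hγ

end Statements
end

section
/- Let D be a triangulated category, χ a morphism in D, and (a,b,c) : (φ₀,ψ₀) → (φ₁,ψ₁) a middling good morphism of distinguished triangles (one that extends to a 3×3 diagram of triangles). If a ⊥ χ, Σa ⊥ χ, c ⊥ χ, Σc ⊥ χ, and Σ⁻¹c ⊥ χ (homotopy orthogonality), then b ⊥ χ. -/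
/-!
(HO1) for `e` together with (HO2) for `Σe` forces every map `Cone e ⟶ Σ⁻¹ Cone χ` to vanish,
and (HO2) for `e` together with (HO1) for `Σ⁻¹e` forces every map `Cone e ⟶ Cone χ` to vanish.
The 3×3 diagram supplies a distinguished triangle `Cone a → Cone b → Cone c → Σ Cone a`, so a map
out of `Cone b` vanishes as soon as it vanishes on `Cone a` and all maps out of `Cone c` do.
For (HO1) this applies directly to maps into `Σ⁻¹ Cone χ`; for (HO2), a map `Cone b ⟶ Cone χ`
in the kernel of the test restricts along `Cone a → Cone b` to one in the kernel of the test
for `a`, which is zero by (HO2) for `a`.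
-/

open CategoryTheory Category Limits Pretriangulated ZeroObject

universe v u w

section

variable {D : Type u} [Category.{v} D] [HasZeroObject D] [Preadditive D]
  [HasShift D ℤ] [∀ n : ℤ, (shiftFunctor D n).Additive] [Pretriangulated D]

lemma mk_shift_distinguished_of_negOnePow_eq_neg_one {X Y Z : D}
    {f : X ⟶ Y} {α : Y ⟶ Z} {β : Z ⟶ X⟦(1:ℤ)⟧} (h : Triangle.mk f α β ∈ distTriang D)
    (n : ℤ) (hn : n.negOnePow = -1) :
    Triangle.mk (f⟦n⟧') (α⟦n⟧')
      (-(β⟦n⟧' ≫ (shiftFunctorComm D 1 n).hom.app X)) ∈ distTriang D := by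
  -- The shifted triangle carries the sign `(-1)ⁿ` on all three maps; negating its first and
  -- third vertices moves the signs onto the connecting map only.
  refine isomorphic_distinguished _ (Triangle.shift_distinguished _ h n) _
    (Triangle.isoMk _ _ (-Iso.refl _) (Iso.refl _) (-Iso.refl _) ?_ ?_ ?_)
  · show f⟦n⟧' ≫ 𝟙 _ = (-𝟙 _) ≫ (n.negOnePow • f⟦n⟧')
    simp [hn]
  · show α⟦n⟧' ≫ (-𝟙 _) = 𝟙 _ ≫ (n.negOnePow • α⟦n⟧')
    simp [hn]
  · show (-(β⟦n⟧' ≫ (shiftFunctorComm D 1 n).hom.app X)) ≫ (-𝟙 _)⟦(1:ℤ)⟧' =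
      (-𝟙 _) ≫ (n.negOnePow • β⟦n⟧' ≫ (shiftFunctorComm D 1 n).hom.app X)
    simp [hn]

lemma eq_zero_of_mk_distinguished_of_comp_eq_zero {X Y Z W : D} {f : X ⟶ Y} {g : Y ⟶ Z}
    {h : Z ⟶ X⟦(1:ℤ)⟧} (hT : Triangle.mk f g h ∈ distTriang D) (hZ : ∀ k : Z ⟶ W, k = 0)
    {u : Y ⟶ W} (hu : f ≫ u = 0) : u = 0 := by
  obtain ⟨k, rfl⟩ := Triangle.yoneda_exact₂ _ hT u hu
  exact (hZ k).symm ▸ comp_zero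

lemma exists_iso_of_mk_distinguished {X Y C C' : D} {f : X ⟶ Y} {α : Y ⟶ C}
    {β : C ⟶ X⟦(1:ℤ)⟧} {α' : Y ⟶ C'} {β' : C' ⟶ X⟦(1:ℤ)⟧}
    (h : Triangle.mk f α β ∈ distTriang D) (h' : Triangle.mk f α' β' ∈ distTriang D) :
    ∃ g : C ≅ C', α ≫ g.hom = α' := by
  let e := isoTriangleOfIso₁₂ _ _ h h' (Iso.refl X) (Iso.refl Y)
    ((comp_id f).trans (id_comp f).symm)
  exact ⟨Triangle.π₃.mapIso e, e.hom.comm₂.trans (id_comp α')⟩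

variable {E₀ E₁ M₀ M₁ Ce Cm : D} {e : E₀ ⟶ E₁} {m : M₀ ⟶ M₁}
  {αe : E₁ ⟶ Ce} {βe : Ce ⟶ E₀⟦(1:ℤ)⟧} {αm : M₁ ⟶ Cm} {βm : Cm ⟶ M₀⟦(1:ℤ)⟧}

namespace HOrth

lemma comp_comp_shift_eq_zero (h : HOrth e m) (he : Triangle.mk e αe βe ∈ distTriang D)
    (hm : Triangle.mk m αm βm ∈ distTriang D) (φ : Ce ⟶ Cm⟦(-1:ℤ)⟧) :
    αe ≫ φ ≫ βm⟦(-1:ℤ)⟧' = 0 := by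
  simpa only [← assoc, Preadditive.IsIso.comp_right_eq_zero] using (h _ _ _ he _ _ _ hm).1 φ

lemma eq_zero_of_comp_comp_eq_zero (h : HOrth e m) (he : Triangle.mk e αe βe ∈ distTriang D)
    (hm : Triangle.mk m αm βm ∈ distTriang D) {ψ : Ce ⟶ Cm} (hψ : αe ≫ ψ ≫ βm = 0) :
    ψ = 0 :=
  (h _ _ _ he _ _ _ hm).2 (by simpa using hψ)

lemma eq_zero_of_shift_one (h : HOrth e m) (h₁ : HOrth (e⟦(1:ℤ)⟧') m)
    (he : Triangle.mk e αe βe ∈ distTriang D) (hm : Triangle.mk m αm βm ∈ distTriang D)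
    (φ : Ce ⟶ Cm⟦(-1:ℤ)⟧) : φ = 0 := by
  let ε := (shiftFunctorCompIsoId D (-1:ℤ) 1 (by omega)).hom
  have hε : φ⟦(1:ℤ)⟧' ≫ ε.app Cm = 0 := by
    refine h₁.eq_zero_of_comp_comp_eq_zero
      (mk_shift_distinguished_of_negOnePow_eq_neg_one he 1 (by simp)) hm ?_
    have hβ : ε.app Cm ≫ βm = βm⟦(-1:ℤ)⟧'⟦(1:ℤ)⟧' ≫ ε.app _ := (ε.naturality βm).symm
    simp only [assoc, hβ]
    simp only [← assoc, ← Functor.map_comp, h.comp_comp_shift_eq_zero he hm]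
    simp
  apply (shiftFunctor D (1:ℤ)).map_injective
  simpa using hε

lemma eq_zero_of_shift_neg_one (h : HOrth e m) (hneg : HOrth (e⟦(-1:ℤ)⟧') m)
    (he : Triangle.mk e αe βe ∈ distTriang D) (hm : Triangle.mk m αm βm ∈ distTriang D)
    (ψ : Ce ⟶ Cm) : ψ = 0 := by
  refine h.eq_zero_of_comp_comp_eq_zero he hm ((shiftFunctor D (-1:ℤ)).map_injective ?_)
  simpa using hneg.comp_comp_shift_eq_zero
    (mk_shift_distinguished_of_negOnePow_eq_neg_one he (-1) (by simp)) hm (ψ⟦(-1:ℤ)⟧')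

end HOrth

end

section Statements

variable {D : Type u} [Category.{v} D] [HasZeroObject D] [Preadditive D]
  [HasShift D ℤ] [∀ n : ℤ, (shiftFunctor D n).Additive] [Pretriangulated D]

theorem homotopy_orthogonal_of_middling_good_general {A₀ B₀ C₀ A₁ B₁ C₁ Y₀ Y₁ : D}
    (φ₀ : A₀ ⟶ B₀) (ψ₀ : B₀ ⟶ C₀) (δ₀ : C₀ ⟶ A₀⟦(1:ℤ)⟧)
    (φ₁ : A₁ ⟶ B₁) (ψ₁ : B₁ ⟶ C₁) (δ₁ : C₁ ⟶ A₁⟦(1:ℤ)⟧)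
    (a : A₀ ⟶ A₁) (b : B₀ ⟶ B₁) (c : C₀ ⟶ C₁)
    (hmg : MiddlingGood φ₀ ψ₀ δ₀ φ₁ ψ₁ δ₁ a b c)
    (χ : Y₀ ⟶ Y₁)
    (ha : HOrth a χ) (hShiftA : HOrth (a⟦(1:ℤ)⟧') χ)
    (hc : HOrth c χ) (hShiftC : HOrth (c⟦(1:ℤ)⟧') χ) (hShiftInvC : HOrth (c⟦(-1:ℤ)⟧') χ) :
    HOrth b χ := by
  obtain ⟨Ca, Cb, Cc, αa, βa, αb, βb, αc, βc, fa, fb, δ, hTa, hTb, hTc, hTf, hsq, -⟩ := hmg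
  intro Cb' αb' βb' hTb' Z u v hTχ
  obtain ⟨g, hg⟩ := exists_iso_of_mk_distinguished hTb hTb'
  refine ⟨fun φ => ?_, fun f₁ f₂ hf => ?_⟩
  · have hφ : φ = 0 := by
      rw [← cancel_epi g.hom, comp_zero]
      exact eq_zero_of_mk_distinguished_of_comp_eq_zero hTf
        (hc.eq_zero_of_shift_one hShiftC hTc hTχ) (ha.eq_zero_of_shift_one hShiftA hTa hTχ _)
    simp [hφ]
  · rw [← sub_eq_zero, ← cancel_epi g.hom, comp_zero]
    refine eq_zero_of_mk_distinguished_of_comp_eq_zero hTf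
      (hc.eq_zero_of_shift_neg_one hShiftInvC hTc hTχ) (ha.eq_zero_of_comp_comp_eq_zero hTa hTχ ?_)
    have hf' : αb' ≫ (f₁ - f₂) ≫ v = 0 := by
      simpa only [Preadditive.sub_comp, Preadditive.comp_sub, sub_eq_zero] using hf
    simp only [assoc]
    rw [← reassoc_of% hsq, reassoc_of% hg, hf', comp_zero]

/-- Lemma 1.10: if, in a middling good morphism of triangles `(a,b,c)`, the morphisms
`a`, `Σa`, `c`, `Σc` and `Σ⁻¹c` are all left homotopy orthogonal to `χ`, then so is
`b`. -/
theorem homotopy_orthogonal_of_middling_good {A₀ B₀ C₀ A₁ B₁ C₁ Y₀ Y₁ : D}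
    (φ₀ : A₀ ⟶ B₀) (ψ₀ : B₀ ⟶ C₀) (δ₀ : C₀ ⟶ A₀⟦(1:ℤ)⟧)
    (φ₁ : A₁ ⟶ B₁) (ψ₁ : B₁ ⟶ C₁) (δ₁ : C₁ ⟶ A₁⟦(1:ℤ)⟧)
    (hT₀ : Triangle.mk φ₀ ψ₀ δ₀ ∈ (distTriang D))
    (hT₁ : Triangle.mk φ₁ ψ₁ δ₁ ∈ (distTriang D))
    (a : A₀ ⟶ A₁) (b : B₀ ⟶ B₁) (c : C₀ ⟶ C₁)
    (h1 : a ≫ φ₁ = φ₀ ≫ b) (h2 : b ≫ ψ₁ = ψ₀ ≫ c) (h3 : c ≫ δ₁ = δ₀ ≫ a⟦(1:ℤ)⟧')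
    (hmg : MiddlingGood φ₀ ψ₀ δ₀ φ₁ ψ₁ δ₁ a b c)
    (χ : Y₀ ⟶ Y₁)
    (ha : HOrth a χ) (hShiftA : HOrth (a⟦(1:ℤ)⟧') χ)
    (hc : HOrth c χ) (hShiftC : HOrth (c⟦(1:ℤ)⟧') χ) (hShiftInvC : HOrth (c⟦(-1:ℤ)⟧') χ) :
    HOrth b χ :=
  homotopy_orthogonal_of_middling_good_general φ₀ ψ₀ δ₀ φ₁ ψ₁ δ₁ a b c hmg χ ha hShiftA hc hShiftC
    hShiftInvC

end Statements
end

section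
/- Let D be a triangulated category with a t-structure t and consider a homotopy cartesian square with left edge φ : X → X' and right edge ψ : Y → Y'. If τ^{≥0}φ is an isomorphism then τ^{≥0}ψ is an isomorphism; dually, if τ^{≤0}ψ is an isomorphism then τ^{≤0}φ is an isomorphism. In other words, the class E_t is closed under homotopy pushouts and M_t is closed under homotopy pullbacks. -/
open CategoryTheory Category Limits Pretriangulated ZeroObject

universe v u w

/-!
Mapping the distinguished triangle `X → X' ⊞ Y → Y' → X⟦1⟧` into an object `B` gives a long
exact sequence of hom groups, and a diagram chase in it shows that `ψ ≫ -` is bijective on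
`Hom(-, B)` as soon as `φ ≫ -` is bijective on `Hom(-, B)` and surjective on `Hom(-, B⟦-1⟧)`;
both hold for `B ∈ D^{≥0}` because `D^{≥0}` is closed under `Σ⁻¹`. Dually, `τ^{≤0}χ` is
invertible iff `- ≫ χ` is bijective on `Hom(A, -)` for all `A ∈ D^{≤0}`, and the same chase
with `Hom(A, -)`, using that `D^{≤0}` is closed under `Σ`, transfers this from `ψ` to `φ`.
-/

section Adjunction

variable {C E : Type*} [Category C] [Category E] {F : C ⥤ E} {G : E ⥤ C}

lemma CategoryTheory.Adjunction.surjective_map_comp_iff (adj : F ⊣ G) {X X' : C} (φ : X ⟶ X')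
    (B : E) :
    Function.Surjective (fun c : F.obj X' ⟶ B => F.map φ ≫ c) ↔
      Function.Surjective (fun c : X' ⟶ G.obj B => φ ≫ c) := by
  have hconj : (fun c : X' ⟶ G.obj B => φ ≫ c) ∘ adj.homEquiv X' B =
      adj.homEquiv X B ∘ (fun c : F.obj X' ⟶ B => F.map φ ≫ c) := by
    funext c
    exact (adj.homEquiv_naturality_left φ c).symm
  rw [← Equiv.surjective_comp (adj.homEquiv X' B), hconj, Equiv.comp_surjective]

end Adjunction

section HomotopyCartesian

variable {D : Type u} [Category.{v} D] [HasZeroObject D] [Preadditive D]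
  [HasShift D ℤ] [∀ n : ℤ, (shiftFunctor D n).Additive] [Pretriangulated D]
  [HasBinaryBiproducts D] {X X' Y Y' : D} {φ : X ⟶ X'} {ψ : Y ⟶ Y'} {f : X ⟶ Y} {g : X' ⟶ Y'}
  {δ : Y' ⟶ X⟦(1:ℤ)⟧}

/-- The square `φ ≫ g = f ≫ ψ` is homotopy cartesian, with connecting morphism `δ`. -/
def IsHomotopyCartesian (φ : X ⟶ X') (ψ : Y ⟶ Y') (f : X ⟶ Y) (g : X' ⟶ Y')
    (δ : Y' ⟶ X⟦(1:ℤ)⟧) : Prop :=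
  Triangle.mk (biprod.lift φ (-f)) (biprod.desc g ψ) δ ∈ distTriang D

namespace IsHomotopyCartesian

lemma comm (hT : IsHomotopyCartesian φ ψ f g δ) : φ ≫ g = f ≫ ψ := by
  have h : biprod.lift φ (-f) ≫ biprod.desc g ψ = 0 := comp_distTriang_mor_zero₁₂ _ hT
  rwa [biprod.lift_desc, Preadditive.neg_comp, add_neg_eq_zero] at h

lemma comp_connecting_eq_zero (hT : IsHomotopyCartesian φ ψ f g δ) : ψ ≫ δ = 0 := by
  have h : biprod.desc g ψ ≫ δ = 0 := comp_distTriang_mor_zero₂₃ _ hT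
  rw [← biprod.inr_desc g ψ, assoc, h, comp_zero]

lemma connecting_comp_shift_eq_zero (hT : IsHomotopyCartesian φ ψ f g δ) :
    δ ≫ φ⟦(1:ℤ)⟧' = 0 := by
  have h : δ ≫ (biprod.lift φ (-f))⟦(1:ℤ)⟧' = 0 := comp_distTriang_mor_zero₃₁ _ hT
  simpa only [assoc, ← Functor.map_comp, biprod.lift_fst, zero_comp]
    using h =≫ (biprod.fst : X' ⊞ Y ⟶ X')⟦(1:ℤ)⟧'

lemma surjective_precomp (hT : IsHomotopyCartesian φ ψ f g δ) {B : D}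
    (hφ : Function.Surjective (fun b : X' ⟶ B => φ ≫ b)) :
    Function.Surjective (fun b : Y' ⟶ B => ψ ≫ b) := by
  intro c
  obtain ⟨b, hb⟩ := hφ (f ≫ c)
  dsimp at hb
  have hk : biprod.lift φ (-f) ≫ biprod.desc b c = 0 := by
    rw [biprod.lift_desc, Preadditive.neg_comp, hb, add_neg_cancel]
  obtain ⟨b', hb'⟩ : ∃ b' : Y' ⟶ B, biprod.desc b c = biprod.desc g ψ ≫ b' :=
    Triangle.yoneda_exact₂ _ hT _ hk
  refine ⟨b', ?_⟩
  show ψ ≫ b' = c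
  rw [← biprod.inr_desc g ψ, assoc, ← hb', biprod.inr_desc]

lemma injective_precomp (hT : IsHomotopyCartesian φ ψ f g δ) {B : D}
    (hφ : Function.Injective (fun b : X' ⟶ B => φ ≫ b))
    (hφ₁ : Function.Surjective (fun b : X'⟦(1:ℤ)⟧ ⟶ B => φ⟦(1:ℤ)⟧' ≫ b)) :
    Function.Injective (fun b : Y' ⟶ B => ψ ≫ b) := by
  intro b₁ b₂ hb
  dsimp at hb
  have hg : g ≫ b₁ = g ≫ b₂ := hφ (by simp only [reassoc_of% hT.comm, hb])
  have hdesc : biprod.desc g ψ ≫ (b₁ - b₂) = 0 := by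
    apply biprod.hom_ext' <;> simp [Preadditive.comp_sub, hg, hb]
  obtain ⟨s, hs⟩ : ∃ s : X⟦(1:ℤ)⟧ ⟶ B, b₁ - b₂ = δ ≫ s := Triangle.yoneda_exact₃ _ hT _ hdesc
  obtain ⟨c, rfl⟩ := hφ₁ s
  rw [← sub_eq_zero, hs, reassoc_of% hT.connecting_comp_shift_eq_zero, zero_comp]

lemma bijective_precomp (hT : IsHomotopyCartesian φ ψ f g δ) {B : D}
    (hφ : Function.Bijective (fun b : X' ⟶ B => φ ≫ b))
    (hφ₁ : Function.Surjective (fun b : X'⟦(1:ℤ)⟧ ⟶ B => φ⟦(1:ℤ)⟧' ≫ b)) :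
    Function.Bijective (fun b : Y' ⟶ B => ψ ≫ b) :=
  ⟨hT.injective_precomp hφ.1 hφ₁, hT.surjective_precomp hφ.2⟩

lemma surjective_postcomp (hT : IsHomotopyCartesian φ ψ f g δ) {A : D}
    (hψ : Function.Surjective (fun a : A ⟶ Y => a ≫ ψ)) :
    Function.Surjective (fun a : A ⟶ X => a ≫ φ) := by
  intro b
  obtain ⟨c, hc⟩ := hψ (b ≫ g)
  dsimp at hc
  have hk : biprod.lift b (-c) ≫ biprod.desc g ψ = 0 := by
    rw [biprod.lift_desc, Preadditive.neg_comp, hc, add_neg_cancel]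
  obtain ⟨a, ha⟩ : ∃ a : A ⟶ X, biprod.lift b (-c) = a ≫ biprod.lift φ (-f) :=
    Triangle.coyoneda_exact₂ _ hT _ hk
  refine ⟨a, ?_⟩
  show a ≫ φ = b
  rw [← biprod.lift_fst φ (-f), ← assoc, ← ha, biprod.lift_fst]

lemma injective_postcomp (hT : IsHomotopyCartesian φ ψ f g δ) {A : D}
    (hψ : Function.Injective (fun a : A ⟶ Y => a ≫ ψ))
    (hψ₁ : Function.Surjective (fun a : A⟦(1:ℤ)⟧ ⟶ Y => a ≫ ψ)) :
    Function.Injective (fun a : A ⟶ X => a ≫ φ) := by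
  intro a₁ a₂ ha
  dsimp at ha
  have hf : a₁ ≫ f = a₂ ≫ f := hψ (by simp only [assoc, ← hT.comm, reassoc_of% ha])
  have hlift : (a₁ - a₂)⟦(1:ℤ)⟧' ≫ (biprod.lift φ (-f))⟦(1:ℤ)⟧' = 0 := by
    rw [← Functor.map_comp, Functor.map_eq_zero_iff]
    apply biprod.hom_ext <;> simp [Preadditive.sub_comp, ha, hf]
  obtain ⟨s, hs⟩ : ∃ s : A⟦(1:ℤ)⟧ ⟶ Y', (a₁ - a₂)⟦(1:ℤ)⟧' = s ≫ δ :=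
    Triangle.coyoneda_exact₁ _ hT _ hlift
  obtain ⟨c, rfl⟩ := hψ₁ s
  rw [← sub_eq_zero]
  apply (shiftFunctor D (1:ℤ)).map_injective
  rw [hs, Functor.map_zero, assoc, hT.comp_connecting_eq_zero, comp_zero]

lemma bijective_postcomp (hT : IsHomotopyCartesian φ ψ f g δ) {A : D}
    (hψ : Function.Bijective (fun a : A ⟶ Y => a ≫ ψ))
    (hψ₁ : Function.Surjective (fun a : A⟦(1:ℤ)⟧ ⟶ Y => a ≫ ψ)) :
    Function.Bijective (fun a : A ⟶ X => a ≫ φ) :=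
  ⟨hT.injective_postcomp hψ.1 hψ₁, hT.surjective_postcomp hψ.2⟩

end IsHomotopyCartesian

end HomotopyCartesian

namespace TData

variable {D : Type u} [Category.{v} D] [HasZeroObject D] [Preadditive D]
  [HasShift D ℤ] [∀ n : ℤ, (shiftFunctor D n).Additive] [Pretriangulated D] (t : TData D)

lemma shift_neg_one_mem_ge {B : D} (hB : B ∈ t.ge) : B⟦(-1:ℤ)⟧ ∈ t.ge :=
  t.shift_ge (t.ge_iso ((shiftFunctorCompIsoId D (-1 : ℤ) 1 (by omega)).app B).symm hB)

lemma bijective_comp_tle_map_iff {A W W' : D} (hA : A ∈ t.le) (χ : W ⟶ W') :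
    Function.Bijective (fun a : A ⟶ t.tle.obj W => a ≫ t.tle.map χ) ↔
      Function.Bijective (fun a : A ⟶ W => a ≫ χ) := by
  let e := Equiv.ofBijective _ (t.tle_univ hA W)
  let e' := Equiv.ofBijective _ (t.tle_univ hA W')
  have hconj : (fun a : A ⟶ W => a ≫ χ) ∘ e = e' ∘ (fun a => a ≫ t.tle.map χ) := by
    funext a
    simp [e, e']
  rw [← Equiv.comp_bijective _ e', ← hconj, Equiv.bijective_comp]

lemma isIso_tle_map_iff {W W' : D} (χ : W ⟶ W') :
    IsIso (t.tle.map χ) ↔ ∀ A ∈ t.le, Function.Bijective (fun a : A ⟶ W => a ≫ χ) := by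
  refine ⟨fun h A hA => ?_, fun h => ?_⟩
  · rw [← t.bijective_comp_tle_map_iff hA]
    exact (isIso_iff_yoneda_map_bijective _).1 h A
  · have h' := fun A hA => (t.bijective_comp_tle_map_iff hA χ).2 (h A hA)
    obtain ⟨r, hr⟩ := (h' _ (t.tle_mem W')).2 (𝟙 _)
    exact ⟨r, (h' _ (t.tle_mem W)).1 (by simp [hr]), hr⟩

end TData

section Statements

variable {D : Type u} [Category.{v} D] [HasZeroObject D] [Preadditive D]
  [HasShift D ℤ] [∀ n : ℤ, (shiftFunctor D n).Additive] [Pretriangulated D]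

/-- Lemma 2.5: in a homotopy cartesian square, if `τ^{≥0}φ` is an isomorphism
(equivalently, `D(φ, B)` is bijective for all `B ∈ D^{≥0}`) then so is `τ^{≥0}ψ`;
dually, if `τ^{≤0}ψ` is an isomorphism then so is `τ^{≤0}φ`. -/
theorem homotopy_cartesian_truncation [HasBinaryBiproducts D] (t : TData D)
    {X X' Y Y' : D} (φ : X ⟶ X') (ψ : Y ⟶ Y') (f : X ⟶ Y) (g : X' ⟶ Y')
    (δ : Y' ⟶ X⟦(1:ℤ)⟧)
    (hT : Triangle.mk (biprod.lift φ (-f)) (biprod.desc g ψ) δ ∈ (distTriang D)) :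
    ((∀ B ∈ t.ge, Function.Bijective (fun b : X' ⟶ B => φ ≫ b)) →
      ∀ B ∈ t.ge, Function.Bijective (fun b : Y' ⟶ B => ψ ≫ b)) ∧
    (IsIso (t.tle.map ψ) → IsIso (t.tle.map φ)) := by
  have hsq : IsHomotopyCartesian φ ψ f g δ := hT
  refine ⟨fun hφ B hB => hsq.bijective_precomp (hφ B hB) ?_, fun hψ => ?_⟩
  · exact ((shiftEquiv D (1:ℤ)).toAdjunction.surjective_map_comp_iff φ B).2
      (hφ _ (t.shift_neg_one_mem_ge hB)).2
  · rw [t.isIso_tle_map_iff] at hψ ⊢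
    exact fun A hA => hsq.bijective_postcomp (hψ A hA) (hψ _ (t.shift_le hA)).2

end Statements
end

section
/- Let D be a triangulated category with a t-structure t = (D^{≤0}, D^{≥0}). Every morphism φ : X → Y in D factors as φ = φ_m ∘ φ_e where τ^{≥1}(φ_e) is an isomorphism and τ^{≤0}(φ_m) is an isomorphism (i.e., φ_e ∈ E_t and φ_m ∈ M_t). -/
open CategoryTheory Category Limits Pretriangulated ZeroObject

universe v u w

section Statements

variable {D : Type u} [Category.{v} D] [HasZeroObject D] [Preadditive D]
  [HasShift D ℤ] [∀ n : ℤ, (shiftFunctor D n).Additive] [Pretriangulated D]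

/-! Factor `φ` through the homotopy pushout `P` of `X ← τ^{≤0}X → τ^{≤0}Y`, the cone of
`τ^{≤0}X → X ⊞ τ^{≤0}Y`. Maps from `P` into `D^{≥1}` are maps from `X`, since `τ^{≤0}X`,
`(τ^{≤0}X)⟦1⟧` and `τ^{≤0}Y` have no nonzero maps into `D^{≥1}`. Maps from `A ∈ D^{≤0}` into `P`
are maps into `Y`: they lift through `τ^{≤0}Y`, and a map `A → P` killed by `P → Y` also dies
in `(τ^{≤0}X)⟦1⟧` (where `σ_X⟦1⟧` is injective on maps from `A`), so it lifts to `X ⊞ τ^{≤0}Y`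
and then to `τ^{≤0}X`, hence is zero. -/

theorem isIso_of_precomp_bijective_of_mem {C : Type*} [Category C] (S : Set C) {Z W : C}
    (hZ : Z ∈ S) (hW : W ∈ S) (f : Z ⟶ W)
    (hf : ∀ B ∈ S, Function.Bijective (fun g : W ⟶ B => f ≫ g)) : IsIso f := by
  obtain ⟨g, hg⟩ := (hf Z hZ).2 (𝟙 Z)
  exact ⟨g, hg, (hf W hW).1 (by simp [reassoc_of% hg])⟩

theorem isIso_of_postcomp_bijective_of_mem {C : Type*} [Category C] (S : Set C) {Z W : C}
    (hZ : Z ∈ S) (hW : W ∈ S) (f : Z ⟶ W)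
    (hf : ∀ A ∈ S, Function.Bijective (fun g : A ⟶ Z => g ≫ f)) : IsIso f := by
  obtain ⟨g, hg⟩ := (hf W hW).2 (𝟙 W)
  exact ⟨g, (hf Z hZ).1 (by simp [hg]), hg⟩

namespace TData

variable (t : TData D)

theorem isIso_tge_map_of_bijective {Z W : D} (f : Z ⟶ W)
    (hf : ∀ B : D, B⟦(1:ℤ)⟧ ∈ t.ge → Function.Bijective (fun g : W ⟶ B => f ≫ g)) :
    IsIso (t.tge.map f) := by
  refine isIso_of_precomp_bijective_of_mem {B | B⟦(1:ℤ)⟧ ∈ t.ge}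
    (t.tge_mem Z) (t.tge_mem W) _ fun B hB => ?_
  have hcomp : (fun g : t.tge.obj Z ⟶ B => t.ρ.app Z ≫ g) ∘ (t.tge.map f ≫ ·) =
      (f ≫ ·) ∘ (fun g : t.tge.obj W ⟶ B => t.ρ.app W ≫ g) := by
    funext g
    simpa using (t.ρ.naturality_assoc f g).symm
  rw [← Function.Bijective.of_comp_iff' (t.tge_univ Z hB), hcomp]
  exact (hf B hB).comp (t.tge_univ W hB)

theorem isIso_tle_map_of_bijective {Z W : D} (f : Z ⟶ W)
    (hf : ∀ A ∈ t.le, Function.Bijective (fun g : A ⟶ Z => g ≫ f)) :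
    IsIso (t.tle.map f) := by
  refine isIso_of_postcomp_bijective_of_mem t.le (t.tle_mem Z) (t.tle_mem W) _ fun A hA => ?_
  have hcomp : (fun g : A ⟶ t.tle.obj W => g ≫ t.σ.app W) ∘ (· ≫ t.tle.map f) =
      (· ≫ f) ∘ (fun g : A ⟶ t.tle.obj Z => g ≫ t.σ.app Z) := by
    funext g
    simp
  rw [← Function.Bijective.of_comp_iff' (t.tle_univ hA W), hcomp]
  exact (hf A hA).comp (t.tle_univ hA Z)

theorem comp_shift_map_σ_injective {A : D} (hA : A ∈ t.le) (X : D) :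
    Function.Injective
      (fun g : A ⟶ (t.tle.obj X)⟦(1:ℤ)⟧ => g ≫ (t.σ.app X)⟦(1:ℤ)⟧') := by
  -- `τ^{≤0}X` is a retract of the first vertex `A'` of a truncation triangle of `X`.
  obtain ⟨A', B', i, p, δ', hA', hB', hT⟩ := t.tri X
  obtain ⟨β : t.tle.obj X ⟶ A', hβ : t.σ.app X = β ≫ i⟩ :=
    Triangle.coyoneda_exact₂ _ hT (t.σ.app X) (t.hom_zero _ (t.tle_mem X) hB')
  obtain ⟨α, hα : α ≫ t.σ.app X = i⟩ := (t.tle_univ hA' X).2 i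
  have hβα : β ≫ α = 𝟙 _ := (t.tle_univ (t.tle_mem X) X).1 (by simp [hα, ← hβ])
  refine (injective_iff_map_eq_zero (Preadditive.rightComp A _)).2 fun g hg => ?_
  change g ≫ _ = 0 at hg
  obtain ⟨c : A ⟶ B', hc : g ≫ β⟦(1:ℤ)⟧' = c ≫ δ'⟩ :=
    Triangle.coyoneda_exact₁ _ hT (g ≫ β⟦(1:ℤ)⟧') (by
      rw [hβ, Functor.map_comp, ← Category.assoc] at hg
      exact hg)
  obtain rfl : c = 0 := t.hom_zero c hA hB'
  calc g = g ≫ (β ≫ α)⟦(1:ℤ)⟧' := by simp [hβα]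
    _ = 0 := by rw [Functor.map_comp, ← Category.assoc, hc]; simp

variable {X Y : D} (φ : X ⟶ Y)

noncomputable def pushoutSpanMor : t.tle.obj X ⟶ X ⊞ t.tle.obj Y :=
  biprod.lift (t.σ.app X) (-t.tle.map φ)

theorem pushoutSpanMor_comp_fst : t.pushoutSpanMor φ ≫ biprod.fst = t.σ.app X :=
  biprod.lift_fst _ _

theorem pushoutSpanMor_comp_desc {B : D} (f : X ⟶ B) (g : t.tle.obj Y ⟶ B) :
    t.pushoutSpanMor φ ≫ biprod.desc f g = t.σ.app X ≫ f - t.tle.map φ ≫ g := by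
  simp [pushoutSpanMor, sub_eq_add_neg]

theorem pushoutSpanMor_comp_desc_self :
    t.pushoutSpanMor φ ≫ biprod.desc φ (t.σ.app Y) = 0 := by
  simp [pushoutSpanMor_comp_desc]

theorem exists_eq_comp_pushoutSpanMor {A : D} (hA : A ∈ t.le) (r : A ⟶ X ⊞ t.tle.obj Y)
    (hr : r ≫ biprod.desc φ (t.σ.app Y) = 0) : ∃ a, r = a ≫ t.pushoutSpanMor φ := by
  obtain ⟨a, ha : a ≫ t.σ.app X = r ≫ biprod.fst⟩ := (t.tle_univ hA X).2 (r ≫ biprod.fst)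
  refine ⟨a, biprod.hom_ext _ _ (by simpa [pushoutSpanMor] using ha.symm) ?_⟩
  have hsnd : (r ≫ biprod.snd + a ≫ t.tle.map φ) ≫ t.σ.app Y = 0 ≫ t.σ.app Y := by
    simp [reassoc_of% ha, ← hr, biprod.desc_eq, add_comm]
  simpa [pushoutSpanMor, eq_neg_iff_add_eq_zero] using (t.tle_univ hA Y).1 hsnd

variable {P : D} {q : X ⊞ t.tle.obj Y ⟶ P} {δ : P ⟶ (t.tle.obj X)⟦(1:ℤ)⟧}

theorem isIso_tge_map_inl_comp (hT : Triangle.mk (t.pushoutSpanMor φ) q δ ∈ distTriang D) :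
    IsIso (t.tge.map (biprod.inl ≫ q)) := by
  refine t.isIso_tge_map_of_bijective _ fun B hB => ⟨?_, fun f => ?_⟩
  · refine (injective_iff_map_eq_zero (Preadditive.leftComp B (biprod.inl ≫ q))).2
      fun h hh => ?_
    change (biprod.inl ≫ q) ≫ h = 0 at hh
    have hq : q ≫ h = 0 := biprod.hom_ext' _ _ (by simpa using hh)
      (by simpa using t.hom_zero (biprod.inr ≫ q ≫ h) (t.tle_mem Y) hB)
    obtain ⟨c : (t.tle.obj X)⟦(1:ℤ)⟧ ⟶ B, rfl : h = δ ≫ c⟩ := Triangle.yoneda_exact₃ _ hT h hq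
    rw [t.hom_zero c (t.shift_le (t.tle_mem X)) hB, comp_zero]
  · have hf : t.pushoutSpanMor φ ≫ biprod.desc f 0 = 0 := by
      simpa [pushoutSpanMor_comp_desc] using t.hom_zero (t.σ.app X ≫ f) (t.tle_mem X) hB
    obtain ⟨g : P ⟶ B, hg : biprod.desc f 0 = q ≫ g⟩ := Triangle.yoneda_exact₂ _ hT _ hf
    exact ⟨g, by simp [← hg]⟩

theorem isIso_tle_map_of_comp_eq_desc (hT : Triangle.mk (t.pushoutSpanMor φ) q δ ∈ distTriang D)
    {m : P ⟶ Y} (hm : q ≫ m = biprod.desc φ (t.σ.app Y)) :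
    IsIso (t.tle.map m) := by
  refine t.isIso_tle_map_of_bijective _ fun A hA => ⟨?_, fun f => ?_⟩
  · refine (injective_iff_map_eq_zero (Preadditive.rightComp A m)).2 fun h hh => ?_
    change h ≫ m = 0 at hh
    have hδ : h ≫ δ = 0 := t.comp_shift_map_σ_injective hA X <| by
      have hδw : δ ≫ (t.pushoutSpanMor φ)⟦(1:ℤ)⟧' = 0 := comp_distTriang_mor_zero₃₁ _ hT
      change (h ≫ δ) ≫ (t.σ.app X)⟦(1:ℤ)⟧' = 0 ≫ _
      rw [← t.pushoutSpanMor_comp_fst, Functor.map_comp, Category.assoc, reassoc_of% hδw]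
      simp
    obtain ⟨r : A ⟶ X ⊞ t.tle.obj Y, rfl : h = r ≫ q⟩ := Triangle.coyoneda_exact₃ _ hT h hδ
    obtain ⟨a, rfl⟩ := t.exists_eq_comp_pushoutSpanMor φ hA r (by simpa [hm] using hh)
    have hwq : t.pushoutSpanMor φ ≫ q = 0 := comp_distTriang_mor_zero₁₂ _ hT
    rw [Category.assoc, hwq, comp_zero]
  · obtain ⟨a, ha : a ≫ t.σ.app Y = f⟩ := (t.tle_univ hA Y).2 f
    exact ⟨a ≫ biprod.inr ≫ q, by simp [hm, ha]⟩

end TData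

/-- Lemma 2.6: every morphism is `F_t`-crumbled, i.e. factors as a morphism inverted
by `τ^{≥1}` followed by a morphism inverted by `τ^{≤0}`. -/
theorem exists_Et_Mt_factorization (t : TData D) {X Y : D} (φ : X ⟶ Y) :
    ∃ (P : D) (e : X ⟶ P) (m : P ⟶ Y),
      IsIso (t.tge.map e) ∧ IsIso (t.tle.map m) ∧ e ≫ m = φ := by
  obtain ⟨P, q, δ, hT⟩ := distinguished_cocone_triangle (t.pushoutSpanMor φ)
  obtain ⟨m : P ⟶ Y, hm : biprod.desc φ (t.σ.app Y) = q ≫ m⟩ :=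
    Triangle.yoneda_exact₂ _ hT _ (t.pushoutSpanMor_comp_desc_self φ)
  exact ⟨P, biprod.inl ≫ q, m, t.isIso_tge_map_inl_comp φ hT,
    t.isIso_tle_map_of_comp_eq_desc φ hT hm.symm, by simp [← hm]⟩

end Statements
end

section
/- Let D be a triangulated category with a t-structure t. For every e ∈ E_t and m ∈ M_t one has e ⊥ m in the sense of homotopy orthogonality: with cones C_e and C_m of chosen triangles on e and m, the map D(C_e, Σ⁻¹C_m) → D(E₁, M₀) is zero and the map D(C_e, C_m) → D(E₁, ΣM₀) is injective. -/
open CategoryTheory Category Limits Pretriangulated ZeroObject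

universe v u w

/-!
The cone of `e ∈ E_t` lies in `D^{≤0}` and the cone of `m ∈ M_t` in `D^{≥0}`: precomposition
with `e` is bijective on maps into `D^{≥1}`, postcomposition with `m` is bijective on maps out
of `D^{≤0}`, and `D^{≤0}`, `D^{≥0}` are recognised by orthogonality, using truncation triangles.
(HO1) is then an instance of `Hom(D^{≤0}, D^{≥1}) = 0`. For (HO2), a map `ψ : C_e ⟶ C_m` is
determined by `α_e ≫ ψ`, because `β_e` kills every map into `D^{≥0}`. Finally `f = α_e ≫ ψ` is
killed by `e` and by `β_m`, so `f = x ≫ α_m` with `e ≫ x = y ≫ m`; such a square has a partial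
lift `l` with `e ≫ l = y`, which forces `x` to factor through `m`, hence `f = 0`. For the
partial lift, `y` restricted to `C_e⟦-1⟧ ∈ D^{≤1}` is killed by `m` and by all maps into
`D^{≥1}`, so it factors through `τ^{≤0} M₀ ≅ τ^{≤0} M₁`, and then through `(τ^{≥1} M₁)⟦-1⟧`,
which lies in `D^{≥2}` and therefore receives no nonzero map from `D^{≤1}`.
-/

section TStructure

open Preadditive

variable {D : Type u} [Category.{v} D] [HasZeroObject D] [Preadditive D]
  [HasShift D ℤ] [∀ n : ℤ, (shiftFunctor D n).Additive] [Pretriangulated D]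

namespace TData

variable (t : TData D)

lemma shift_neg_shift_mem_ge_iff (X : D) : X⟦(-1:ℤ)⟧⟦(1:ℤ)⟧ ∈ t.ge ↔ X ∈ t.ge :=
  ⟨t.ge_iso (shiftNegShift X (1:ℤ)), t.ge_iso (shiftNegShift X (1:ℤ)).symm⟩

variable {t}

lemma eq_zero_of_comp_mor₁_eq_zero {A X B W : D} {i : A ⟶ X} {p : X ⟶ B}
    {δ : B ⟶ A⟦(1:ℤ)⟧} (hT : Triangle.mk i p δ ∈ distTriang D) (hB : B⟦(1:ℤ)⟧ ∈ t.ge)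
    (hW : W⟦(1:ℤ)⟧ ∈ t.le) {ξ : W ⟶ A} (hξ : ξ ≫ i = 0) : ξ = 0 := by
  have hξ' : ξ⟦(1:ℤ)⟧' ≫ i⟦(1:ℤ)⟧' = 0 := by rw [← Functor.map_comp, hξ, Functor.map_zero]
  obtain ⟨g, hg⟩ : ∃ g : W⟦(1:ℤ)⟧ ⟶ B, ξ⟦(1:ℤ)⟧' = g ≫ δ :=
    Triangle.coyoneda_exact₁ _ hT _ hξ'
  rw [t.hom_zero g hW hB, zero_comp] at hg
  exact (Functor.map_eq_zero_iff _).1 hg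

lemma exists_comp_mor₁_eq {A X B Y : D} {i : A ⟶ X} {p : X ⟶ B}
    {δ : B ⟶ A⟦(1:ℤ)⟧} (hT : Triangle.mk i p δ ∈ distTriang D) (hB : B⟦(1:ℤ)⟧ ∈ t.ge)
    (hY : Y ∈ t.le) (f : Y ⟶ X) : ∃ ξ : Y ⟶ A, ξ ≫ i = f := by
  obtain ⟨ξ, hξ⟩ : ∃ ξ : Y ⟶ A, f = ξ ≫ i :=
    Triangle.coyoneda_exact₂ _ hT f (t.hom_zero (f ≫ p) hY hB)
  exact ⟨ξ, hξ.symm⟩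

lemma mem_le_of_forall_hom_eq_zero {X : D}
    (h : ∀ Z : D, Z⟦(1:ℤ)⟧ ∈ t.ge → ∀ f : X ⟶ Z, f = 0) : X ∈ t.le := by
  obtain ⟨A, B, i, p, δ, hA, hB, hT⟩ := t.tri X
  have hB₀ : IsZero B := by
    have hp : p ≫ 𝟙 B = 0 := by rw [comp_id, h B hB p]
    obtain ⟨g, hg⟩ : ∃ g : A⟦(1:ℤ)⟧ ⟶ B, 𝟙 B = δ ≫ g := Triangle.yoneda_exact₃ _ hT _ hp
    rw [IsZero.iff_id_eq_zero, hg, t.hom_zero g (t.shift_le hA) hB, comp_zero]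
  have : IsIso i := (Triangle.isZero₃_iff_isIso₁ _ hT).1 hB₀
  exact t.le_iso (asIso i) hA

lemma mem_ge_of_forall_hom_eq_zero {X : D}
    (h : ∀ Y ∈ t.le, ∀ f : Y⟦(1:ℤ)⟧ ⟶ X, f = 0) : X ∈ t.ge := by
  obtain ⟨A, B, i, p, δ, hA, hB, hT⟩ := t.tri (X⟦(-1:ℤ)⟧)
  have hi : i = 0 := by
    have := h A hA (i⟦(1:ℤ)⟧' ≫ (shiftNegShift X (1:ℤ)).hom)
    rwa [Preadditive.IsIso.comp_right_eq_zero, Functor.map_eq_zero_iff] at this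
  have hA₀ : IsZero A := by
    rw [IsZero.iff_id_eq_zero]
    exact eq_zero_of_comp_mor₁_eq_zero hT hB (t.shift_le hA) (by rw [hi, comp_zero])
  have : IsIso p := (Triangle.isZero₁_iff_isIso₂ _ hT).1 hA₀
  exact (t.shift_neg_shift_mem_ge_iff X).1
    (t.ge_iso ((shiftFunctor D (1:ℤ)).mapIso (asIso p)).symm hB)

end TData

variable {t : TData D}

namespace Et

lemma precomp_bijective {A B : D} {e : A ⟶ B} (he : Et t e) {Z : D}
    (hZ : Z⟦(1:ℤ)⟧ ∈ t.ge) : Function.Bijective (fun g : B ⟶ Z => e ≫ g) := by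
  have : IsIso (t.tge.map e) := he
  have hcomp : (fun g : B ⟶ Z => e ≫ g) ∘ (fun g => t.ρ.app B ≫ g) =
      (fun g => t.ρ.app A ≫ g) ∘ (fun g => t.tge.map e ≫ g) := by
    funext g
    simpa using t.ρ.naturality_assoc e g
  have hiso : Function.Bijective (fun g : t.tge.obj B ⟶ Z => t.tge.map e ≫ g) :=
    ⟨fun _ _ h => (cancel_epi _).1 h, fun g => ⟨inv (t.tge.map e) ≫ g, by simp⟩⟩
  rw [← Function.Bijective.of_comp_iff _ (t.tge_univ B hZ), hcomp]
  exact (t.tge_univ A hZ).comp hiso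

variable {E₀ E₁ C : D} {e : E₀ ⟶ E₁} {α : E₁ ⟶ C} {β : C ⟶ E₀⟦(1:ℤ)⟧}

lemma eq_zero_of_mor₂_comp_eq_zero (he : Et t e) (hT : Triangle.mk e α β ∈ distTriang D)
    {Z : D} (hZ : Z ∈ t.ge) {f : C ⟶ Z} (hf : α ≫ f = 0) : f = 0 := by
  obtain ⟨h, rfl⟩ : ∃ h : E₀⟦(1:ℤ)⟧ ⟶ Z, f = β ≫ h := Triangle.yoneda_exact₃ _ hT f hf
  have hβe : β ≫ e⟦(1:ℤ)⟧' = 0 := comp_distTriang_mor_zero₃₁ _ hT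
  -- `h` factors through `e⟦1⟧`, because `Z⟦-1⟧ ∈ D^{≥1}`.
  obtain ⟨h₀, hh₀⟩ := (shiftFunctor D (1:ℤ)).map_surjective (h ≫ (shiftNegShift Z (1:ℤ)).inv)
  obtain ⟨k, rfl⟩ : ∃ k : E₁ ⟶ Z⟦(-1:ℤ)⟧, e ≫ k = h₀ :=
    (he.precomp_bijective ((t.shift_neg_shift_mem_ge_iff Z).2 hZ)).2 h₀
  have hβh : β ≫ h ≫ (shiftNegShift Z (1:ℤ)).inv = 0 := by
    rw [← hh₀, Functor.map_comp, reassoc_of% hβe, zero_comp]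
  rwa [← assoc, Preadditive.IsIso.comp_right_eq_zero] at hβh

lemma cone_mem_le (he : Et t e) (hT : Triangle.mk e α β ∈ distTriang D) : C ∈ t.le := by
  have heα : e ≫ α = 0 := comp_distTriang_mor_zero₁₂ _ hT
  refine t.mem_le_of_forall_hom_eq_zero fun Z hZ f => ?_
  refine he.eq_zero_of_mor₂_comp_eq_zero hT (t.shift_ge hZ) ?_
  refine (he.precomp_bijective hZ).1 ?_
  change e ≫ α ≫ f = e ≫ 0
  rw [reassoc_of% heα, zero_comp, comp_zero]

end Et

namespace Mt

lemma postcomp_bijective {A B : D} {m : A ⟶ B} (hm : Mt t m) {Y : D} (hY : Y ∈ t.le) :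
    Function.Bijective (fun g : Y ⟶ A => g ≫ m) := by
  have : IsIso (t.tle.map m) := hm
  have hcomp : (fun g : Y ⟶ A => g ≫ m) ∘ (fun g => g ≫ t.σ.app A) =
      (fun g => g ≫ t.σ.app B) ∘ (fun g => g ≫ t.tle.map m) := by
    funext g
    simp
  have hiso : Function.Bijective (fun g : Y ⟶ t.tle.obj A => g ≫ t.tle.map m) :=
    ⟨fun _ _ h => (cancel_mono _).1 h, fun g => ⟨g ≫ inv (t.tle.map m), by simp⟩⟩
  rw [← Function.Bijective.of_comp_iff _ (t.tle_univ hY A), hcomp]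
  exact (t.tle_univ hY B).comp hiso

variable {M₀ M₁ : D} {m : M₀ ⟶ M₁}

lemma cone_mem_ge (hm : Mt t m) {C : D} {α : M₁ ⟶ C} {β : C ⟶ M₀⟦(1:ℤ)⟧}
    (hT : Triangle.mk m α β ∈ distTriang D) : C ∈ t.ge := by
  have hmα : m ≫ α = 0 := comp_distTriang_mor_zero₁₂ _ hT
  have hβm : β ≫ m⟦(1:ℤ)⟧' = 0 := comp_distTriang_mor_zero₃₁ _ hT
  refine t.mem_ge_of_forall_hom_eq_zero fun Y hY f => ?_
  obtain ⟨g, hg⟩ := (shiftFunctor D (1:ℤ)).map_surjective (f ≫ β)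
  have hgm : g ≫ m = 0 := by
    rw [← Functor.map_eq_zero_iff (shiftFunctor D (1:ℤ)), Functor.map_comp, hg, assoc, hβm,
      comp_zero]
  have hfβ : f ≫ β = 0 := by
    rw [← hg, (hm.postcomp_bijective hY).1 (hgm.trans zero_comp.symm), Functor.map_zero]
  obtain ⟨χ, rfl⟩ : ∃ χ : Y⟦(1:ℤ)⟧ ⟶ M₁, f = χ ≫ α := Triangle.coyoneda_exact₃ _ hT f hfβ
  obtain ⟨χ', rfl⟩ := (hm.postcomp_bijective (t.shift_le hY)).2 χ
  change (χ' ≫ m) ≫ α = 0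
  rw [assoc, hmα, comp_zero]

lemma exists_iso_truncation (hm : Mt t m)
    {A₀ B₀ : D} {i₀ : A₀ ⟶ M₀} {p₀ : M₀ ⟶ B₀} {δ₀ : B₀ ⟶ A₀⟦(1:ℤ)⟧}
    (hT₀ : Triangle.mk i₀ p₀ δ₀ ∈ distTriang D) (hA₀ : A₀ ∈ t.le) (hB₀ : B₀⟦(1:ℤ)⟧ ∈ t.ge)
    {A₁ B₁ : D} {i₁ : A₁ ⟶ M₁} {p₁ : M₁ ⟶ B₁} {δ₁ : B₁ ⟶ A₁⟦(1:ℤ)⟧}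
    (hT₁ : Triangle.mk i₁ p₁ δ₁ ∈ distTriang D) (hA₁ : A₁ ∈ t.le) (hB₁ : B₁⟦(1:ℤ)⟧ ∈ t.ge) :
    ∃ a : A₀ ≅ A₁, a.hom ≫ i₁ = i₀ ≫ m := by
  obtain ⟨a, ha⟩ := TData.exists_comp_mor₁_eq hT₁ hB₁ hA₀ (i₀ ≫ m)
  obtain ⟨c, hc⟩ := (hm.postcomp_bijective hA₁).2 i₁
  obtain ⟨b, hb⟩ := TData.exists_comp_mor₁_eq hT₀ hB₀ hA₁ c
  have hab : (a ≫ b) ≫ i₀ = i₀ :=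
    (hm.postcomp_bijective hA₀).1 (by simp only [assoc, hb, hc, ha])
  have hba : (b ≫ a) ≫ i₁ = i₁ := by
    rw [assoc, ha, ← assoc, hb]
    exact hc
  refine ⟨⟨a, b, ?_, ?_⟩, ha⟩
  · rw [← sub_eq_zero]
    exact TData.eq_zero_of_comp_mor₁_eq_zero hT₀ hB₀ (t.shift_le hA₀)
      (by rw [sub_comp, hab, id_comp, sub_self])
  · rw [← sub_eq_zero]
    exact TData.eq_zero_of_comp_mor₁_eq_zero hT₁ hB₁ (t.shift_le hA₁)
      (by rw [sub_comp, hba, id_comp, sub_self])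

lemma eq_zero_of_comp_eq_zero (hm : Mt t m) {W : D} (hW : W⟦(1:ℤ)⟧ ∈ t.le) {v : W ⟶ M₀}
    (hvm : v ≫ m = 0) (hv : ∀ Z : D, Z⟦(1:ℤ)⟧ ∈ t.ge → ∀ z : M₀ ⟶ Z, v ≫ z = 0) :
    v = 0 := by
  obtain ⟨A₀, B₀, i₀, p₀, δ₀, hA₀, hB₀, hT₀⟩ := t.tri M₀
  obtain ⟨A₁, B₁, i₁, p₁, δ₁, hA₁, hB₁, hT₁⟩ := t.tri M₁
  obtain ⟨a, ha⟩ := hm.exists_iso_truncation hT₀ hA₀ hB₀ hT₁ hA₁ hB₁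
  obtain ⟨w, rfl⟩ : ∃ w : W ⟶ A₀, v = w ≫ i₀ := Triangle.coyoneda_exact₂ _ hT₀ v (hv B₀ hB₀ p₀)
  have hwa : w ≫ a.hom = 0 :=
    TData.eq_zero_of_comp_mor₁_eq_zero hT₁ hB₁ hW (by rw [assoc, ha, ← assoc, hvm])
  rw [Preadditive.IsIso.comp_right_eq_zero] at hwa
  rw [hwa, zero_comp]

end Mt

namespace Et

variable {E₀ E₁ M₀ M₁ : D} {e : E₀ ⟶ E₁} {m : M₀ ⟶ M₁}

lemma exists_lift (he : Et t e) (hm : Mt t m) {x : E₁ ⟶ M₁} {y : E₀ ⟶ M₀}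
    (sq : e ≫ x = y ≫ m) : ∃ l : E₁ ⟶ M₀, e ≫ l = y := by
  obtain ⟨C, α, β, hT⟩ := distinguished_cocone_triangle e
  have hT' := inv_rot_of_distTriang _ hT
  let γ : C⟦(-1:ℤ)⟧ ⟶ E₀ := (Triangle.mk e α β).invRotate.mor₁
  have hγe : γ ≫ e = 0 := comp_distTriang_mor_zero₁₂ _ hT'
  have hγy : γ ≫ y = 0 := by
    refine hm.eq_zero_of_comp_eq_zero
      (t.le_iso (shiftNegShift C (1:ℤ)).symm (he.cone_mem_le hT)) ?_ fun Z hZ z => ?_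
    · rw [assoc, ← sq, reassoc_of% hγe, zero_comp]
    · obtain ⟨z', hz'⟩ : ∃ z' : E₁ ⟶ Z, e ≫ z' = y ≫ z := (he.precomp_bijective hZ).2 (y ≫ z)
      rw [assoc, ← hz', reassoc_of% hγe, zero_comp]
  obtain ⟨l, hl⟩ : ∃ l : E₁ ⟶ M₀, y = e ≫ l := Triangle.yoneda_exact₂ _ hT' y hγy
  exact ⟨l, hl.symm⟩

lemma exists_comp_eq_of_comp_eq_zero (he : Et t e) (hm : Mt t m) {g : E₁ ⟶ M₁}
    (hg : e ≫ g = 0) : ∃ g' : E₁ ⟶ M₀, g' ≫ m = g := by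
  obtain ⟨C, α, β, hT⟩ := distinguished_cocone_triangle e
  obtain ⟨g₁, rfl⟩ : ∃ g₁ : C ⟶ M₁, g = α ≫ g₁ := Triangle.yoneda_exact₂ _ hT g hg
  obtain ⟨g₂, rfl⟩ := (hm.postcomp_bijective (he.cone_mem_le hT)).2 g₁
  exact ⟨α ≫ g₂, assoc _ _ _⟩

lemma eq_zero_of_comp_eq_zero_of_comp_eq_zero (he : Et t e) (hm : Mt t m) {C : D}
    {α : M₁ ⟶ C} {β : C ⟶ M₀⟦(1:ℤ)⟧} (hT : Triangle.mk m α β ∈ distTriang D)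
    {f : E₁ ⟶ C} (hef : e ≫ f = 0) (hfβ : f ≫ β = 0) : f = 0 := by
  have hmα : m ≫ α = 0 := comp_distTriang_mor_zero₁₂ _ hT
  obtain ⟨x, rfl⟩ : ∃ x : E₁ ⟶ M₁, f = x ≫ α := Triangle.coyoneda_exact₃ _ hT f hfβ
  have hexα : (e ≫ x) ≫ α = 0 := by rw [assoc, hef]
  obtain ⟨y, hxy⟩ : ∃ y : E₀ ⟶ M₀, e ≫ x = y ≫ m := Triangle.coyoneda_exact₂ _ hT _ hexα
  obtain ⟨l, rfl⟩ := he.exists_lift hm hxy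
  obtain ⟨g, hg⟩ := he.exists_comp_eq_of_comp_eq_zero hm (g := x - l ≫ m)
    (by rw [comp_sub, hxy, assoc, sub_self])
  rw [eq_sub_iff_add_eq, ← add_comp] at hg
  rw [← hg, assoc, hmα, comp_zero]

end Et

end TStructure

section Statements

open Preadditive

variable {D : Type u} [Category.{v} D] [HasZeroObject D] [Preadditive D]
  [HasShift D ℤ] [∀ n : ℤ, (shiftFunctor D n).Additive] [Pretriangulated D]

/-- Lemma 2.7: if `e ∈ E_t` and `m ∈ M_t` then `e ⊥ m` in the sense of homotopy
orthogonality. -/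
theorem Et_homotopy_orthogonal_Mt (t : TData D) {E₀ E₁ M₀ M₁ : D}
    (e : E₀ ⟶ E₁) (m : M₀ ⟶ M₁)
    (he : IsIso (t.tge.map e)) (hm : IsIso (t.tle.map m)) : HOrth e m := by
  intro Ce αe βe hTe Cm αm βm hTm
  have hCe : Ce ∈ t.le := Et.cone_mem_le he hTe
  have hCm : Cm ∈ t.ge := Mt.cone_mem_ge hm hTm
  have heα : e ≫ αe = 0 := comp_distTriang_mor_zero₁₂ _ hTe
  refine ⟨fun φ => ?_, fun φ₁ φ₂ h => ?_⟩
  · rw [t.hom_zero φ hCe ((t.shift_neg_shift_mem_ge_iff Cm).2 hCm), zero_comp, comp_zero]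
  · rw [← sub_eq_zero]
    refine Et.eq_zero_of_mor₂_comp_eq_zero he hTe hCm ?_
    refine Et.eq_zero_of_comp_eq_zero_of_comp_eq_zero he hm hTm ?_ ?_
    · rw [reassoc_of% heα, zero_comp]
    · simpa only [comp_sub, sub_comp, assoc, sub_eq_zero] using h

end Statements
end
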